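/- arXiv:2508.09933 — 4 statements merged into one kernel-verified Lean document; each statement's English description precedes it below -/
import Mathlib

section
/- Let U be a d×d unitary matrix and suppose n is the smallest positive integer such that U^n = τ·I for some complex number τ with |τ| = 1. If the eigenvalues of U are λ_i = ζ^{k_i}·σ for i = 1,…,d, where ζ is a primitive n-th root of unity, σ^n = τ, and k_i are integers, then gcd(k_1 − k_d, …, k_{d−1} − k_d) is coprime to n. -/
open Matrix

/-- If `U` is a `(d+1)×(d+1)` unitary matrix whose minimal period is `n`
(i.e. `n` is the smallest positive integer with `U ^ n = τ • 1` for some unit-modulus `τ`),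
and the eigenvalues of `U` are `λ i = ζ ^ (k i) * σ` with `ζ` a primitive `n`-th root of
unity and `σ ^ n = τ`, then `gcd (k 1 - k d, …, k (d-1) - k d)` is coprime to `n`. -/
theorem stmt0 (d : ℕ) (U : Matrix (Fin (d + 1)) (Fin (d + 1)) ℂ)
    (hU : U ∈ Matrix.unitaryGroup (Fin (d + 1)) ℂ)
    (n : ℕ) (τ σ ζ : ℂ) (hτ : ‖τ‖ = 1)
    (hn : 0 < n) (hUn : U ^ n = τ • (1 : Matrix (Fin (d + 1)) (Fin (d + 1)) ℂ))
    (hmin : ∀ m : ℕ, 0 < m →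
      (∃ τ' : ℂ, ‖τ'‖ = 1 ∧ U ^ m = τ' • (1 : Matrix (Fin (d + 1)) (Fin (d + 1)) ℂ)) → n ≤ m)
    (hζ : IsPrimitiveRoot ζ n) (hσ : σ ^ n = τ)
    (lam : Fin (d + 1) → ℂ) (k : Fin (d + 1) → ℤ)
    (hlam : ∀ i, lam i = ζ ^ (k i) * σ)
    (P : Matrix (Fin (d + 1)) (Fin (d + 1)) ℂ) (hP : IsUnit P.det)
    (hdiag : U = P * Matrix.diagonal lam * P⁻¹) :
    Int.gcd (Finset.univ.gcd (fun i => k i - k (Fin.last d))) (n : ℤ) = 1 := by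
  set g : ℤ := Finset.univ.gcd (fun i => k i - k (Fin.last d)) with hg
  by_contra hcon
  set e : ℕ := Int.gcd g (n : ℤ) with he
  have hen : (e : ℤ) ∣ (n : ℤ) := Int.gcd_dvd_right g (n : ℤ)
  have heg : (e : ℤ) ∣ g := Int.gcd_dvd_left g (n : ℤ)
  have he0 : 0 < e := by
    rcases Nat.eq_zero_or_pos e with h | h
    · exfalso
      have : (n : ℤ) = 0 := Int.natAbs_eq_zero.mp (Nat.eq_zero_of_gcd_eq_zero_right h)
      simp at this; omega
    · exact h
  have he1 : 1 < e := lt_of_le_of_ne he0 (Ne.symm hcon)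
  obtain ⟨m, hm⟩ : e ∣ n := Int.ofNat_dvd.mp hen
  have hm0 : 0 < m := by
    rcases Nat.eq_zero_or_pos m with h | h
    · subst h; simp at hm; omega
    · exact h
  have hmn : m < n := by nlinarith
  -- ζ and σ have norm 1
  have hζn : ζ ^ n = 1 := hζ.pow_eq_one
  have hζnorm : ‖ζ‖ = 1 := by
    have : ‖ζ‖ ^ n = 1 := by rw [← norm_pow, hζn, norm_one]
    rcases (pow_eq_one_iff_cases).mp this with h|h|h
    · omega
    · exact h
    · exfalso; nlinarith [norm_nonneg ζ, h.1]
  have hσnorm : ‖σ‖ = 1 := by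
    have : ‖σ‖ ^ n = 1 := by rw [← norm_pow, hσ, hτ]
    rcases (pow_eq_one_iff_cases).mp this with h|h|h
    · omega
    · exact h
    · exfalso; nlinarith [norm_nonneg σ, h.1]
  have hζ0 : ζ ≠ 0 := by intro h; rw [h] at hζnorm; simp at hζnorm
  -- the common value of lam i ^ m
  set c : ℂ := ζ ^ (k (Fin.last d) * (m : ℤ)) * σ ^ m with hc
  have hlc : ∀ i, lam i ^ m = c := by
    intro i
    have hdvd : (e : ℤ) ∣ (k i - k (Fin.last d)) :=
      dvd_trans heg (Finset.gcd_dvd (Finset.mem_univ i))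
    obtain ⟨t, ht⟩ := hdvd
    have hzeta1 : ζ ^ ((k i - k (Fin.last d)) * (m : ℤ)) = 1 := by
      rw [(hζ.zpow_eq_one_iff_dvd _)]
      refine ⟨t, ?_⟩
      rw [ht]
      push_cast [hm]
      ring
    rw [hlam i, mul_pow, ← zpow_natCast (ζ ^ (k i)), ← _root_.zpow_mul, hc]
    have : (k i) * (m : ℤ) = (k i - k (Fin.last d)) * (m : ℤ) + k (Fin.last d) * (m : ℤ) := by
      ring
    rw [this, zpow_add₀ hζ0, hzeta1, one_mul]
  have hcnorm : ‖c‖ = 1 := by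
    rw [hc, norm_mul, norm_zpow, norm_pow, hζnorm, hσnorm]
    simp
  -- conjugation power formula
  have hPinv : P * P⁻¹ = 1 := Matrix.mul_nonsing_inv P hP
  have hPinv' : P⁻¹ * P = 1 := Matrix.nonsing_inv_mul P hP
  have hUm : U ^ m = c • (1 : Matrix (Fin (d + 1)) (Fin (d + 1)) ℂ) := by
    have key : ∀ j : ℕ, (P * Matrix.diagonal lam * P⁻¹) ^ j
        = P * (Matrix.diagonal lam) ^ j * P⁻¹ := by
      intro j
      induction j with
      | zero => simp [hPinv]
      | succ j ih =>
        rw [pow_succ, pow_succ, ih]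
        calc P * Matrix.diagonal lam ^ j * P⁻¹ * (P * Matrix.diagonal lam * P⁻¹)
            = P * Matrix.diagonal lam ^ j * (P⁻¹ * P) * Matrix.diagonal lam * P⁻¹ := by
              simp only [Matrix.mul_assoc]
          _ = P * (Matrix.diagonal lam ^ j * Matrix.diagonal lam) * P⁻¹ := by
              rw [hPinv']; simp only [Matrix.mul_one, Matrix.mul_assoc]
    rw [hdiag, key, Matrix.diagonal_pow]
    have : (fun i => lam i ^ m) = fun _ : Fin (d + 1) => c := funext hlc
    rw [show lam ^ m = fun i => lam i ^ m from rfl, this, ← Matrix.smul_one_eq_diagonal,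
      Matrix.mul_smul, Matrix.smul_mul, Matrix.mul_one, hPinv]
  have := hmin m hm0 ⟨c, hcnorm, hUm⟩
  omega
end

section
/- Let U be a d×d unitary matrix with U^n = τ·I for a unit-modulus scalar τ, with n minimal, and let λ_i = ζ^{k_i}·σ be its eigenvalues (ζ a primitive n-th root of unity, σ^n = τ). If a_1,…,a_d are integers with Σa_i = 0 and Σa_i·k_i ≡ 1 (mod n), then σ = λ_i / (λ_1^{a_1}⋯λ_d^{a_d})^{k_i} for each i. In particular, σ lies in the field generated by the eigenvalues λ_1, …, λ_d over ℚ. -/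
open Matrix

lemma zpow_sum_aux {ι : Type*} (x : ℂ) (hx : x ≠ 0) (s : Finset ι) (f : ι → ℤ) :
    x ^ (∑ i ∈ s, f i) = ∏ i ∈ s, x ^ f i := by
  classical
  induction s using Finset.induction_on with
  | empty => simp
  | insert _ _ h ih => rw [Finset.sum_insert h, Finset.prod_insert h, zpow_add₀ hx, ih]

/-- With `U` unitary of minimal period `n`, eigenvalues
`λ i = ζ ^ (k i) * σ` (`ζ` primitive `n`-th root of unity, `σ ^ n = τ`), and integers
`a i` with `∑ a i = 0`, `∑ a i * k i ≡ 1 (mod n)`, one has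
`σ = λ i / (∏ λ j ^ a j) ^ (k i)` for each `i`; in particular `σ ∈ ℚ(λ_1, …, λ_d)`. -/
theorem stmt10 (d : ℕ) (U : Matrix (Fin (d + 1)) (Fin (d + 1)) ℂ)
    (hU : U ∈ Matrix.unitaryGroup (Fin (d + 1)) ℂ)
    (n : ℕ) (hn : 0 < n) (τ σ ζ : ℂ) (hτ : ‖τ‖ = 1)
    (hUn : U ^ n = τ • (1 : Matrix (Fin (d + 1)) (Fin (d + 1)) ℂ))
    (hmin : ∀ m : ℕ, 0 < m →
      (∃ τ' : ℂ, ‖τ'‖ = 1 ∧ U ^ m = τ' • (1 : Matrix (Fin (d + 1)) (Fin (d + 1)) ℂ)) → n ≤ m)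
    (hζ : IsPrimitiveRoot ζ n) (hσ : σ ^ n = τ)
    (lam : Fin (d + 1) → ℂ) (k : Fin (d + 1) → ℤ)
    (hlam : ∀ i, lam i = ζ ^ (k i) * σ)
    (P : Matrix (Fin (d + 1)) (Fin (d + 1)) ℂ) (hP : IsUnit P.det)
    (hdiag : U = P * Matrix.diagonal lam * P⁻¹)
    (a : Fin (d + 1) → ℤ) (ha0 : (∑ i, a i) = 0)
    (hak : (∑ i, a i * k i) ≡ 1 [ZMOD (n : ℤ)]) :
    (∀ i, σ = lam i / (∏ j, lam j ^ a j) ^ (k i)) ∧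
      σ ∈ IntermediateField.adjoin ℚ (Set.range lam) := by
  have hτ0 : τ ≠ 0 := fun h => by simp [h] at hτ
  have hσ0 : σ ≠ 0 := fun h => hτ0 (by rw [← hσ, h, zero_pow hn.ne'])
  have hζ0 : ζ ≠ 0 := hζ.ne_zero hn.ne'
  have hprod : (∏ j, lam j ^ a j) = ζ := by
    have h1 : (∏ j, lam j ^ a j) = ζ ^ (∑ j, a j * k j) * σ ^ (∑ j, a j) := by
      rw [zpow_sum_aux ζ hζ0, zpow_sum_aux σ hσ0, ← Finset.prod_mul_distrib]
      refine Finset.prod_congr rfl fun j _ => ?_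
      rw [hlam j, mul_zpow, ← _root_.zpow_mul, mul_comm (k j)]
    obtain ⟨c, hc⟩ := Int.ModEq.dvd hak
    have hsum : (∑ j, a j * k j) = 1 - (n : ℤ) * c := by linarith
    rw [h1, ha0, zpow_zero, mul_one, hsum, zpow_sub₀ hζ0, zpow_one, _root_.zpow_mul,
      hζ.zpow_eq_one, _root_.one_zpow, div_one]
  have key : ∀ i, σ = lam i / (∏ j, lam j ^ a j) ^ (k i) := by
    intro i
    rw [hprod, hlam i, mul_comm, mul_div_assoc, div_self (zpow_ne_zero _ hζ0), mul_one]
  refine ⟨key, ?_⟩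
  rw [key 0]
  have hmem : ∀ j, lam j ∈ IntermediateField.adjoin ℚ (Set.range lam) := fun j =>
    IntermediateField.subset_adjoin ℚ _ ⟨j, rfl⟩
  exact div_mem (hmem 0) (zpow_mem (prod_mem fun j _ => zpow_mem (hmem j) _) _)
end

section
/- Let μ ∈ ℂ with |μ| = 1, let a = 1/(2√2), b = (1/2)√(3/2), let U_κ = diag(μ⁹, μ, μ, μ⁹) and U_α the 4×4 matrix with rows (a, −b, b, −a), (b, −a, −a, b), (b, a, −a, −b), (a, b, b, a). Then the characteristic polynomial of U = U_κ·U_α equals p(t) = t⁴ − 2a(μ⁸ − 1)μ·t³ + 2a²(μ⁸ − 1)²μ²·t² + 2a(μ⁸ − 1)μ¹¹·t + μ²⁰. -/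
open Matrix Polynomial

/-- With `|μ| = 1`, `a = 1/(2√2)`, `b = (1/2)√(3/2)`,
`U_κ = diag(μ⁹, μ, μ, μ⁹)` and `U_α` the rotation matrix below, the characteristic
polynomial of `U = U_κ · U_α` is
`t⁴ − 2a(μ⁸−1)μ t³ + 2a²(μ⁸−1)²μ² t² + 2a(μ⁸−1)μ¹¹ t + μ²⁰`. -/
theorem stmt13 (μ : ℂ) (hμ : ‖μ‖ = 1) (a b : ℂ)
    (ha : a = 1 / (2 * (Real.sqrt 2 : ℂ)))
    (hb : b = (1 / 2) * (Real.sqrt (3 / 2) : ℂ))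
    (Uκ Uα U : Matrix (Fin 4) (Fin 4) ℂ)
    (hUκ : Uκ = Matrix.diagonal ![μ ^ 9, μ, μ, μ ^ 9])
    (hUα : Uα = !![a, -b, b, -a; b, -a, -a, b; b, a, -a, -b; a, b, b, a])
    (hUdef : U = Uκ * Uα) :
    U.charpoly =
      X ^ 4 - C (2 * a * (μ ^ 8 - 1) * μ) * X ^ 3
        + C (2 * a ^ 2 * (μ ^ 8 - 1) ^ 2 * μ ^ 2) * X ^ 2
        + C (2 * a * (μ ^ 8 - 1) * μ ^ 11) * X + C (μ ^ 20) := by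

  have h2 : ((Real.sqrt 2 : ℝ) : ℂ) ^ 2 = 2 := by
    rw [← Complex.ofReal_pow, Real.sq_sqrt (by norm_num : (0:ℝ) ≤ 2)]
    norm_num
  have h32 : ((Real.sqrt (3/2) : ℝ) : ℂ) ^ 2 = 3/2 := by
    rw [← Complex.ofReal_pow, Real.sq_sqrt (by norm_num : (0:ℝ) ≤ 3/2)]
    norm_num
  have ha2 : a ^ 2 = 1 / 8 := by
    rw [ha, div_pow, mul_pow, h2]; norm_num
  have hb2 : b ^ 2 = 3 / 8 := by
    rw [hb, mul_pow, h32]; norm_num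
  have hC8 : (8 : ℂ[X]) = C (8:ℂ) := (map_ofNat C 8).symm
  have hC3 : (3 : ℂ[X]) = C (3:ℂ) := (map_ofNat C 3).symm
  have hA : (8 : ℂ[X]) * (C a : ℂ[X]) ^ 2 = 1 := by
    rw [← map_pow, ha2, hC8, ← C_mul]
    norm_num
  have hB : (8 : ℂ[X]) * (C b : ℂ[X]) ^ 2 = 3 := by
    rw [← map_pow, hb2, hC8, hC3, ← C_mul]
    norm_num
  have hU : U = !![μ^9*a, -(μ^9*b), μ^9*b, -(μ^9*a);
                   μ*b, -(μ*a), -(μ*a), μ*b;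
                   μ*b, μ*a, -(μ*a), -(μ*b);
                   μ^9*a, μ^9*b, μ^9*b, μ^9*a] := by
    subst hUdef hUκ hUα
    ext i j
    fin_cases i <;> fin_cases j <;>
      simp [Matrix.mul_apply, Fin.sum_univ_four, Matrix.diagonal] <;> ring
  rw [Matrix.charpoly, hU]
  simp only [charmatrix_apply, Matrix.det_succ_row_zero, Fin.sum_univ_succ,
    Matrix.submatrix_apply, Matrix.det_fin_one, Fin.sum_univ_zero, Fin.succAbove,
    Matrix.cons_val', Matrix.cons_val_zero, Matrix.cons_val_one, Matrix.head_cons,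
    Matrix.empty_val', Matrix.cons_val_fin_one, Matrix.head_fin_const, Matrix.of_apply,
    Matrix.diagonal_apply, Matrix.smul_apply, Matrix.one_apply, Fin.val_zero, Fin.val_succ,
    Fin.castSucc, Fin.castAdd, Fin.castLE, Fin.lt_def, Fin.val_one, Matrix.map_apply,
    _root_.map_mul, map_pow, map_neg, _root_.map_one, map_ofNat, smul_eq_mul]
  norm_num [Fin.succ_ne_zero, Fin.ext_iff]
  simp only [Matrix.cons_val_two, Matrix.vecHead, Matrix.vecTail, Function.comp_apply, Fin.succ_zero_eq_one, Matrix.cons_val_one, Matrix.cons_val_zero, _root_.map_mul, map_neg, map_pow]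
  refine mul_left_cancel₀ (show (16 : ℂ[X]) ≠ 0 by norm_num) ?_
  linear_combination ((1 : ℂ[X]) * C μ ^ 20 + (16 : ℂ[X]) * C b ^ 2 * C μ ^ 20 + (-8 : ℂ[X]) * C a * C μ ^ 11 * X + (8 : ℂ[X]) * C a * C μ ^ 19 * X + (8 : ℂ[X]) * C a ^ 2 * C μ ^ 20) * hA + ((5 : ℂ[X]) * C μ ^ 20 + (8 : ℂ[X]) * C b ^ 2 * C μ ^ 20 + (-8 : ℂ[X]) * C a * C μ ^ 11 * X + (8 : ℂ[X]) * C a * C μ ^ 19 * X) * hB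
end

section
/- Let U be a d×d unitary matrix with algebraic entries generating a number field K with [K:ℚ] = D. Then the set of positive integers n for which U can satisfy U^n = τ·I (τ unit-modulus, n minimal) is contained in the finite set {n : φ(n) divides d!·D}, and every element of this set satisfies n ≤ 2·(d!·D)². -/
open Matrix Module Polynomial


lemma tot_aux (n : ℕ) : n ≤ 2 * n.totient ^ 2 ∧ (Odd n → n ≤ n.totient ^ 2) := by
  induction n using Nat.recOnPosPrimePosCoprime with
  | prime_pow p k hp hk =>
      have hp' : Nat.Prime p := hp
      rw [Nat.totient_prime_pow hp' hk]
      rcases eq_or_ne p 2 with rfl | hodd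
      · constructor
        · calc 2 ^ k ≤ 2 * (2 ^ (k-1))^2 := by
                rw [← pow_mul, ← pow_succ']
                exact Nat.pow_le_pow_right (by norm_num) (by omega)
          _ ≤ 2 * (2 ^ (k-1) * (2-1))^2 := by norm_num
        · intro h
          exact absurd h (Nat.not_odd_iff_even.mpr (Nat.even_pow.mpr ⟨even_two, hk.ne'⟩))
      · have h3 : 3 ≤ p := by
          have := hp'.two_le
          omega
        have key : p ^ k ≤ (p ^ (k - 1) * (p - 1)) ^ 2 := by
          have h1 : p ≤ (p-1)^2 := by
            obtain ⟨c, rfl⟩ := Nat.exists_eq_add_of_le h3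
            have h4 : 3 + c - 1 = c + 2 := by omega
            rw [h4]
            nlinarith
          calc p ^ k ≤ p ^ ((k-1)*2) * p := by
                rw [← pow_succ]
                exact Nat.pow_le_pow_right (by omega) (by omega)
          _ ≤ p ^ ((k-1)*2) * (p-1)^2 := Nat.mul_le_mul_left _ h1
          _ = (p ^ (k-1) * (p-1))^2 := by rw [mul_pow, ← pow_mul]
        exact ⟨key.trans (by omega), fun _ => key⟩
  | zero => simp
  | one => simp
  | coprime a b ha hb hab iha ihb =>
      rw [Nat.totient_mul hab]
      rcases Nat.even_or_odd a with hea | hoa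
      · have hob : Odd b := by
          rcases Nat.even_or_odd b with heb | hob
          · have h2 := Nat.dvd_gcd hea.two_dvd heb.two_dvd
            rw [Nat.Coprime] at hab
            rw [hab] at h2
            omega
          · exact hob
        constructor
        · calc a * b ≤ (2 * a.totient ^2) * (b.totient ^2) :=
              Nat.mul_le_mul iha.1 (ihb.2 hob)
          _ = 2 * (a.totient * b.totient)^2 := by ring
        · intro h
          exact absurd h (Nat.not_odd_iff_even.mpr (hea.mul_right b))
      · rcases Nat.even_or_odd b with heb | hob
        · constructor
          · calc a * b ≤ (a.totient ^2) * (2 * b.totient ^2) :=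
                Nat.mul_le_mul (iha.2 hoa) ihb.1
            _ = 2 * (a.totient * b.totient)^2 := by ring
          · intro h
            exact absurd h (Nat.not_odd_iff_even.mpr (heb.mul_left a))
        · have key : a * b ≤ (a.totient * b.totient)^2 := by
            calc a*b ≤ a.totient^2 * b.totient^2 := Nat.mul_le_mul (iha.2 hoa) (ihb.2 hob)
            _ = _ := by ring
          exact ⟨key.trans (by omega), fun _ => key⟩

lemma le_two_mul_totient_sq (n : ℕ) : n ≤ 2 * n.totient ^ 2 := (tot_aux n).1


lemma real_pow_eq_one {x : ℝ} {n : ℕ} (hx : 0 ≤ x) (hn : 0 < n) (h : x ^ n = 1) : x = 1 := by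
  rcases lt_trichotomy x 1 with h1 | h1 | h1
  · have := pow_lt_one₀ hx h1 hn.ne'
    rw [h] at this; exact absurd this (lt_irrefl 1)
  · exact h1
  · have := one_lt_pow₀ h1 hn.ne'
    rw [h] at this; exact absurd this (lt_irrefl 1)

set_option maxHeartbeats 2000000 in
set_option synthInstance.maxHeartbeats 800000 in
lemma key (d : ℕ) (U : Matrix (Fin d) (Fin d) ℂ) (K : IntermediateField ℚ ℂ)
    (hK : ∀ i j, U i j ∈ K) (hfin : FiniteDimensional ℚ K) (n : ℕ) (hn : 0 < n)
    (τ : ℂ) (hτ : ‖τ‖ = 1) (hUn : U ^ n = τ • (1 : Matrix (Fin d) (Fin d) ℂ))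
    (hmin : ∀ m, 0 < m → (∃ τ' : ℂ, ‖τ'‖ = 1 ∧ U ^ m = τ' • (1 : Matrix (Fin d) (Fin d) ℂ)) → n ≤ m) :
    n.totient ∣ d.factorial * Module.finrank ℚ K := by
  rcases Nat.eq_zero_or_pos d with rfl | hd
  · -- trivial case d = 0
    have h1 : U ^ 1 = (1 : ℂ) • (1 : Matrix (Fin 0) (Fin 0) ℂ) := by
      ext i j; exact i.elim0
    have := hmin 1 one_pos ⟨1, by simp, h1⟩
    interval_cases n
    simp
  haveI : Nonempty (Fin d) := ⟨⟨0, hd⟩⟩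
  -- basic facts about the minimal polynomial
  set p := minpoly ℂ U with hp
  have hint : IsIntegral ℂ U := IsIntegral.of_finite ℂ U
  have hpmonic : p.Monic := minpoly.monic hint
  have hp0 : p ≠ 0 := hpmonic.ne_zero
  have hτ0 : τ ≠ 0 := by intro h; rw [h] at hτ; simp at hτ
  have haevalpow : ∀ (m : ℕ) (c : ℂ), (Polynomial.aeval U) (X ^ m - C c) = U ^ m - c • 1 := by
    intro m c
    rw [map_sub, aeval_X_pow, aeval_C, Algebra.algebraMap_eq_smul_one]
  have hdvd_n : p ∣ X ^ n - C τ := by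
    apply minpoly.dvd
    rw [haevalpow, hUn, sub_self]
  have hsep : p.Separable := by
    refine Polynomial.Separable.of_dvd ?_ hdvd_n
    exact separable_X_pow_sub_C τ (Nat.cast_ne_zero.mpr hn.ne') hτ0
  have hdeg : 0 < p.degree := minpoly.degree_pos hint
  obtain ⟨l0, hl0⟩ := Complex.exists_root hdeg
  have hl0mem : l0 ∈ p.roots := by rwa [mem_roots hp0]
  have hroot_pow : ∀ r ∈ p.roots, r ^ n = τ := by
    intro r hr
    have h2 := eval_eq_zero_of_dvd_of_eval_eq_zero hdvd_n ((mem_roots hp0).mp hr)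
    simp only [eval_sub, eval_pow, eval_X, eval_C, sub_eq_zero] at h2
    exact h2
  have hrne : ∀ r ∈ p.roots, r ≠ 0 := by
    intro r hr h0
    have := hroot_pow r hr
    rw [h0, zero_pow hn.ne'] at this
    exact hτ0 this.symm
  -- the matrix over K and its characteristic polynomial
  set U' : Matrix (Fin d) (Fin d) K := fun i j => ⟨U i j, hK i j⟩ with hU'
  have hUmap : U = U'.map (algebraMap K ℂ) := by ext i j; rfl
  set q := U'.charpoly with hq
  have hqmonic : q.Monic := Matrix.charpoly_monic U'
  have hq0 : q ≠ 0 := hqmonic.ne_zero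
  have hcp : U.charpoly = q.map (algebraMap K ℂ) := by
    rw [hUmap, ← Matrix.charpoly_map]
  have hpq : p ∣ q.map (algebraMap K ℂ) := by
    apply minpoly.dvd
    rw [← hcp]
    exact Matrix.aeval_self_charpoly U
  -- the splitting field L
  set L := IntermediateField.adjoin K (q.rootSet ℂ) with hL
  have hsplits : (q.map (algebraMap K ℂ)).Splits := IsAlgClosed.splits _
  haveI hLsf : Polynomial.IsSplittingField K L q :=
    IntermediateField.adjoin_rootSet_isSplittingField hsplits
  haveI : FiniteDimensional K L := Polynomial.IsSplittingField.finiteDimensional L q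
  have hrootL : ∀ r ∈ p.roots, r ∈ L := by
    intro r hr
    apply IntermediateField.subset_adjoin
    rw [Polynomial.mem_rootSet']
    refine ⟨(hqmonic.map (algebraMap K ℂ)).ne_zero, ?_⟩
    have : (q.map (algebraMap K ℂ)).eval r = 0 :=
      eval_eq_zero_of_dvd_of_eval_eq_zero hpq ((mem_roots hp0).mp hr)
    rwa [Polynomial.aeval_def, Polynomial.eval₂_eq_eval_map]
  -- the subgroup of units with values in L
  set P : Subgroup ℂˣ :=
    { carrier := {u : ℂˣ | (u : ℂ) ∈ L}
      mul_mem' := fun {a b} ha hb => by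
        simp only [Set.mem_setOf_eq, Units.val_mul] at *
        exact mul_mem ha hb
      one_mem' := by simp only [Set.mem_setOf_eq, Units.val_one]; exact one_mem L
      inv_mem' := fun {a} ha => by
        simp only [Set.mem_setOf_eq, Units.val_inv_eq_inv_val] at *
        exact L.inv_mem ha } with hP
  -- the subgroup generated by ratios of roots
  set Sr : Set ℂˣ := {u : ℂˣ | ∃ r ∈ p.roots, (u : ℂ) = r / l0} with hSr
  set H : Subgroup ℂˣ := Subgroup.closure Sr with hH
  have hHroots : H ≤ rootsOfUnity n ℂ := by
    rw [hH, Subgroup.closure_le]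
    rintro u ⟨r, hr, hu⟩
    rw [SetLike.mem_coe, mem_rootsOfUnity]
    apply Units.ext
    push_cast
    rw [hu, div_pow, hroot_pow r hr, hroot_pow l0 hl0mem, div_self hτ0]
  have hHP : H ≤ P := by
    rw [hH, Subgroup.closure_le]
    rintro u ⟨r, hr, hu⟩
    show (u : ℂ) ∈ L
    rw [hu]
    exact L.div_mem (hrootL r hr) (hrootL l0 hl0mem)
  haveI : NeZero n := ⟨hn.ne'⟩
  haveI : Finite H := by
    have h1 : Finite (rootsOfUnity n ℂ) := inferInstance
    have h2 : (SetLike.coe (rootsOfUnity n ℂ)).Finite := Set.finite_coe_iff.mp h1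
    exact Set.finite_coe_iff.mpr (h2.subset hHroots)
  obtain ⟨g, hg⟩ := IsCyclic.exists_generator (α := H)
  set ζ : ℂˣ := (g : ℂˣ) with hζ
  set e := orderOf ζ with he
  have hζH : ζ ∈ H := g.2
  have hζn : ζ ^ n = 1 := by
    have := hHroots hζH
    rwa [mem_rootsOfUnity] at this
  have he_dvd : e ∣ n := orderOf_dvd_of_pow_eq_one hζn
  have he_pos : 0 < e := (isOfFinOrder_iff_pow_eq_one.mpr ⟨n, hn, hζn⟩).orderOf_pos
  have hratio : ∀ r ∈ p.roots, r ^ e = l0 ^ e := by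
    intro r hr
    set u : ℂˣ := (Units.mk0 r (hrne r hr)) * (Units.mk0 l0 (hrne l0 hl0mem))⁻¹ with hu
    have huval : (u : ℂ) = r / l0 := by
      rw [hu, Units.val_mul, Units.val_inv_eq_inv_val, div_eq_mul_inv]
      rfl
    have huH : u ∈ H := Subgroup.subset_closure ⟨r, hr, huval⟩
    obtain ⟨k, hk⟩ := hg ⟨u, huH⟩
    have hk' : ζ ^ k = u := by
      have := congrArg (fun x : H => (x : ℂˣ)) hk
      simpa using this
    have hue : u ^ e = 1 := by
      rw [← hk']
      rw [← zpow_natCast (ζ ^ k) e, ← _root_.zpow_mul, mul_comm, _root_.zpow_mul, zpow_natCast,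
        pow_orderOf_eq_one, _root_.one_zpow]
    have : ((u : ℂ)) ^ e = 1 := by
      rw [← Units.val_pow_eq_pow_val, hue, Units.val_one]
    rw [huval, div_pow, div_eq_one_iff_eq (pow_ne_zero e (hrne l0 hl0mem))] at this
    exact this
  -- e is a period, hence e = n
  set τ' : ℂ := l0 ^ e with hτ'
  have hpdvd_e : p ∣ X ^ e - C τ' := by
    have hsplit : p.Splits := IsAlgClosed.splits p
    have hfact : p = (p.roots.map fun r => X - C r).prod :=
      hsplit.eq_prod_roots_of_monic hpmonic
    have hnodup : p.roots.Nodup := Polynomial.nodup_roots hsep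
    have hfs : ∏ r ∈ p.roots.toFinset, (X - C r) = (p.roots.map fun r => X - C r).prod := by
      rw [Finset.prod, Multiset.toFinset_val, Multiset.dedup_eq_self.mpr hnodup]
    have hdvd2 : (∏ r ∈ p.roots.toFinset, (X - C r)) ∣ X ^ e - C τ' := by
      apply Finset.prod_dvd_of_coprime
      · intro a ha b hb hab
        exact isCoprime_X_sub_C_of_isUnit_sub (sub_ne_zero_of_ne hab).isUnit
      · intro r hr
        rw [dvd_iff_isRoot]
        show eval r (X ^ e - C τ') = 0
        rw [eval_sub, eval_pow, eval_X, eval_C, hratio r (Multiset.mem_toFinset.mp hr), sub_self]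
    rw [hfact, ← hfs]
    exact hdvd2
  have hUe : U ^ e = τ' • 1 := by
    obtain ⟨h, hh⟩ := hpdvd_e
    have : (Polynomial.aeval U) (X ^ e - C τ') = 0 := by
      rw [hh, _root_.map_mul, minpoly.aeval, zero_mul]
    rw [haevalpow] at this
    rwa [sub_eq_zero] at this
  have hl0norm : ‖l0‖ = 1 := by
    have : ‖l0‖ ^ n = 1 := by
      rw [← norm_pow, hroot_pow l0 hl0mem, hτ]
    exact real_pow_eq_one (norm_nonneg _) hn this
  have hτ'norm : ‖τ'‖ = 1 := by rw [hτ', norm_pow, hl0norm, one_pow]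
  have hen : e = n :=
    Nat.le_antisymm (Nat.le_of_dvd hn he_dvd) (hmin e he_pos ⟨τ', hτ'norm, hUe⟩)
  -- ζ is a primitive n-th root of unity lying in L
  have hprim : IsPrimitiveRoot ((ζ : ℂ)) n := by
    have : IsPrimitiveRoot ζ n := hen ▸ IsPrimitiveRoot.orderOf ζ
    exact IsPrimitiveRoot.coe_units_iff.mpr this
  -- ζ lies in L
  have hζLmem : (ζ : ℂ) ∈ L := hHP hζH
  set ζL : L := ⟨(ζ : ℂ), hζLmem⟩ with hζLdef
  have hcoe : ∀ (m : ℕ), ((ζL ^ m : L) : ℂ) = (ζ : ℂ) ^ m := by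
    intro m
    exact SubmonoidClass.coe_pow ζL m
  have hprimL : IsPrimitiveRoot ζL n := by
    refine ⟨?_, ?_⟩
    · apply Subtype.ext
      rw [hcoe n]
      exact hprim.pow_eq_one
    · intro l hl
      apply hprim.dvd_of_pow_eq_one
      have := congrArg (fun x : L => (x : ℂ)) hl
      simpa [hcoe l] using this
  -- char zero and instances
  haveI : CharZero ↥L := ⟨fun a b h => by
    have h2 := congrArg (algebraMap ↥L ℂ) h
    rw [map_natCast, map_natCast] at h2
    exact_mod_cast h2⟩
  haveI sc : IsScalarTower ℚ ↥K ↥L := IsScalarTower.of_algebraMap_eq' (Subsingleton.elim _ _)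
  haveI : FiniteDimensional ℚ ↥L := FiniteDimensional.trans ℚ ↥K ↥L
  -- the cyclotomic subfield
  set F : IntermediateField ℚ ↥L := IntermediateField.adjoin ℚ {ζL} with hF
  have hFfin : Module.finrank ℚ F = n.totient := by
    have hintζ : IsIntegral ℚ ζL := IsIntegral.of_finite ℚ ζL
    rw [hF, IntermediateField.adjoin.finrank hintζ,
      ← Polynomial.cyclotomic_eq_minpoly_rat hprimL hn, Polynomial.natDegree_cyclotomic]
  have h1 : n.totient ∣ Module.finrank ℚ ↥L := by
    have h2 := Module.finrank_mul_finrank ℚ ↥F ↥L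
    rw [hFfin] at h2
    exact Dvd.intro _ h2
  -- Galois side : [L : K] divides d!
  have h2 : Module.finrank ↥K ↥L ∣ d.factorial := by
    haveI : Fact ((q.map (algebraMap ↥K ℂ)).Splits) := ⟨hsplits⟩
    haveI : Normal ↥K ↥L := Normal.of_isSplittingField q
    haveI : IsGalois ↥K ↥L := ⟨⟩
    have hcard : Module.finrank ↥K ↥L = Fintype.card (↥L ≃ₐ[↥K] ↥L) :=
      (IsGalois.card_aut_eq_finrank ↥K ↥L).symm.trans Nat.card_eq_fintype_card
    let eqv : (↥L ≃ₐ[↥K] ↥L) ≃* q.Gal :=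
      AlgEquiv.autCongr (Polynomial.IsSplittingField.algEquiv ↥L q)
    have hcard2 : Fintype.card (↥L ≃ₐ[↥K] ↥L) = Nat.card q.Gal := by
      rw [← Nat.card_eq_fintype_card]
      exact Nat.card_congr eqv.toEquiv
    have hinj := Polynomial.Gal.galActionHom_injective q ℂ
    have hdvd3 : Nat.card q.Gal ∣ Nat.card (Equiv.Perm (q.rootSet ℂ)) := by
      have := Subgroup.card_subgroup_dvd_card (Polynomial.Gal.galActionHom q ℂ).range
      rwa [Nat.card_congr (MonoidHom.ofInjective hinj).toEquiv] at *
    have hperm : Nat.card (Equiv.Perm (q.rootSet ℂ)) = (Fintype.card (q.rootSet ℂ)).factorial := by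
      rw [Nat.card_eq_fintype_card, Fintype.card_perm]
    have hle : Fintype.card (q.rootSet ℂ) ≤ d := by
      have hbound : Fintype.card (q.rootSet ℂ) ≤ q.natDegree := by
        have hc : Fintype.card (q.rootSet ℂ) = (q.aroots ℂ).toFinset.card :=
          Fintype.card_coe _
        rw [hc]
        calc (q.aroots ℂ).toFinset.card ≤ Multiset.card (q.aroots ℂ) :=
              Multiset.toFinset_card_le _
        _ ≤ (q.map (algebraMap ↥K ℂ)).natDegree := Polynomial.card_roots' _
        _ = q.natDegree := hqmonic.natDegree_map _
      rwa [hq, Matrix.charpoly_natDegree_eq_dim, Fintype.card_fin] at hbound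
    rw [hcard, hcard2]
    exact hdvd3.trans (hperm ▸ Nat.factorial_dvd_factorial hle)
  -- put everything together
  have h3 : Module.finrank ℚ ↥L ∣ d.factorial * Module.finrank ℚ ↥K := by
    have h4 := Module.finrank_mul_finrank ℚ ↥K ↥L
    obtain ⟨c, hc⟩ := h2
    exact ⟨c, by rw [← h4, hc]; ring⟩
  exact h1.trans h3


open Matrix Module

/-- If `U` is a `d×d` unitary matrix with algebraic entries generating a
number field `K` with `[K:ℚ] = D`, then any minimal period `n` of `U` lies in the finite
set `{n | φ(n) ∣ d!·D}`, and every element `n` of that set satisfies `n ≤ 2(d!·D)²`. -/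
theorem stmt18 (d : ℕ) (U : Matrix (Fin d) (Fin d) ℂ)
    (hU : U ∈ Matrix.unitaryGroup (Fin d) ℂ)
    (K : IntermediateField ℚ ℂ)
    (hK : K = IntermediateField.adjoin ℚ (Set.range fun p : Fin d × Fin d => U p.1 p.2))
    (hfin : FiniteDimensional ℚ K)
    (D : ℕ) (hD : D = Module.finrank ℚ K) :
    {m : ℕ | 0 < m ∧ Nat.totient m ∣ d.factorial * D}.Finite ∧
      (∀ m ∈ {m : ℕ | 0 < m ∧ Nat.totient m ∣ d.factorial * D},
        m ≤ 2 * (d.factorial * D) ^ 2) ∧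
      ∀ n : ℕ, 0 < n →
        (∃ τ : ℂ, ‖τ‖ = 1 ∧ U ^ n = τ • (1 : Matrix (Fin d) (Fin d) ℂ)) →
        (∀ m : ℕ, 0 < m →
          (∃ τ' : ℂ, ‖τ'‖ = 1 ∧ U ^ m = τ' • (1 : Matrix (Fin d) (Fin d) ℂ)) → n ≤ m) →
        n ∈ {m : ℕ | 0 < m ∧ Nat.totient m ∣ d.factorial * D} ∧
          n ≤ 2 * (d.factorial * D) ^ 2 := by
  have hbound : ∀ m ∈ {m : ℕ | 0 < m ∧ Nat.totient m ∣ d.factorial * D},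
      m ≤ 2 * (d.factorial * D) ^ 2 := by
    rintro m ⟨hm, hdvd⟩
    have hD0 : 0 < D := by
      rw [hD]
      exact Module.finrank_pos
    have hpos : 0 < d.factorial * D := Nat.mul_pos d.factorial_pos hD0
    have h1 : m.totient ≤ d.factorial * D := Nat.le_of_dvd hpos hdvd
    calc m ≤ 2 * m.totient ^ 2 := le_two_mul_totient_sq m
    _ ≤ 2 * (d.factorial * D) ^ 2 := by
        have := Nat.pow_le_pow_left h1 2
        omega
  refine ⟨?_, hbound, ?_⟩
  · apply Set.Finite.subset (Set.finite_Iic (2 * (d.factorial * D) ^ 2))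
    intro m hm
    exact hbound m hm
  · rintro n hn ⟨τ, hτ, hUn⟩ hmin
    have hmem : ∀ i j, U i j ∈ K := by
      intro i j
      rw [hK]
      exact IntermediateField.subset_adjoin ℚ _ ⟨(i, j), rfl⟩
    have hdvd : n.totient ∣ d.factorial * D := by
      rw [hD]
      exact key d U K hmem hfin n hn τ hτ hUn hmin
    exact ⟨⟨hn, hdvd⟩, hbound n ⟨hn, hdvd⟩⟩
end
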